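/- arXiv:2004.00354 — 2 statements merged into one kernel-verified Lean document; each statement's English description precedes it below -/
import Mathlib

section
/- Let A be an n×n invertible complex matrix. Then the smallest singular value satisfies σₙ(A) ≥ |det A| · ((n−1)/‖A‖_F²)^{(n−1)/2}. -/
open Matrix

/-- Singular values of a complex n×n matrix: square roots of the eigenvalues of Aᴴ·A. -/
noncomputable def singVals {n : ℕ} (A : Matrix (Fin n) (Fin n) ℂ) : Fin n → ℝ :=
  fun i => Real.sqrt ((Matrix.isHermitian_conjTranspose_mul_self A).eigenvalues i)

/-- Lower bound for the smallest singular value of an invertible matrix: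
σₙ(A) ≥ |det A|·((n−1)/‖A‖_F²)^((n−1)/2). -/
theorem smallest_singular_value_lower_bound (n : ℕ) (hn : 2 ≤ n)
    (A : Matrix (Fin n) (Fin n) ℂ) (hdet : A.det ≠ 0) :
    ‖A.det‖ *
      (((n : ℝ) - 1) / (∑ i, ∑ j, ‖A i j‖ ^ 2)) ^ (((n : ℝ) - 1) / 2)
      ≤ ⨅ i, singVals A i := by
  have hH := Matrix.isHermitian_conjTranspose_mul_self A
  set ev : Fin n → ℝ := hH.eigenvalues with hev
  set T : ℝ := ∑ i, ∑ j, ‖A i j‖ ^ 2 with hT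
  set d : ℝ := ‖A.det‖ with hd
  set Mr : ℝ := (n : ℝ) - 1 with hMrdef
  have hn2 : (2 : ℝ) ≤ (n : ℝ) := by exact_mod_cast hn
  have hMr : 0 < Mr := by rw [hMrdef]; linarith
  have hd0 : 0 < d := norm_pos_iff.mpr hdet
  -- trace identity
  have htr1 : ((Aᴴ * A).trace) = ((T : ℝ) : ℂ) := by
    rw [Matrix.trace, hT]
    push_cast
    rw [Finset.sum_comm]
    refine Finset.sum_congr rfl fun i _ => ?_
    rw [Matrix.diag, Matrix.mul_apply]
    refine Finset.sum_congr rfl fun j _ => ?_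
    rw [Matrix.conjTranspose_apply, RCLike.star_def, RCLike.conj_mul]
    norm_cast
  have htr2 : (Aᴴ * A).trace = ∑ i, (ev i : ℂ) := by
    conv_lhs => rw [hH.spectral_theorem]
    rw [Unitary.conjStarAlgAut_apply, trace_mul_cycle,
      (Matrix.mem_unitaryGroup_iff').mp (hH.eigenvectorUnitary).2, one_mul, trace_diagonal]
    simp [hev]
  have htrace : ∑ i, ev i = T := by
    have := htr2 ▸ htr1
    exact_mod_cast this
  -- determinant identity
  have hdet1 : (Aᴴ * A).det = ((d ^ 2 : ℝ) : ℂ) := by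
    rw [det_mul, det_conjTranspose, hd, ← Complex.normSq_eq_norm_sq]
    push_cast
    rw [Complex.normSq_eq_conj_mul_self, Complex.star_def]
  have hdet2 : ∏ i, ev i = d ^ 2 := by
    have h1 := hH.det_eq_prod_eigenvalues
    rw [hdet1, ← hev] at h1
    norm_cast at h1
    exact RCLike.ofReal_inj.mp h1.symm
  have hevpos : ∀ i, 0 < ev i := by
    intro i
    rcases lt_or_eq_of_le (Matrix.eigenvalues_conjTranspose_mul_self_nonneg A i) with h | h
    · exact h
    · exfalso
      have : ∏ j, ev j = 0 := Finset.prod_eq_zero (Finset.mem_univ i) h.symm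
      rw [hdet2] at this
      exact (pow_pos hd0 2).ne' this
  have hTpos : 0 < T := by
    rw [← htrace]
    exact Finset.sum_pos (fun j _ => hevpos j) ⟨⟨0, by omega⟩, Finset.mem_univ _⟩
  -- per-index bound
  haveI : Nonempty (Fin n) := ⟨⟨0, by omega⟩⟩
  refine le_ciInf fun i => ?_
  set s := Finset.univ.erase i with hs
  have hcard : (s.card : ℝ) = Mr := by
    rw [hs, Finset.card_erase_of_mem (Finset.mem_univ i), Finset.card_univ, Fintype.card_fin]
    rw [hMrdef]
    have : 1 ≤ n := by omega
    push_cast [Nat.cast_sub this]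
    ring
  have hw' : ∑ _j ∈ s, (Mr⁻¹ : ℝ) = 1 := by
    rw [Finset.sum_const, nsmul_eq_mul, hcard, mul_inv_cancel₀ hMr.ne']
  have hgm := Real.geom_mean_le_arith_mean_weighted s (fun _ => Mr⁻¹) ev
    (fun _ _ => inv_nonneg.mpr hMr.le) hw' (fun j _ => (hevpos j).le)
  have hP : (∏ j ∈ s, ev j) ^ (Mr⁻¹ : ℝ) ≤ T / Mr := by
    calc (∏ j ∈ s, ev j) ^ (Mr⁻¹ : ℝ) = ∏ j ∈ s, ev j ^ (Mr⁻¹ : ℝ) := by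
          rw [← Real.finset_prod_rpow s ev (fun j _ => (hevpos j).le)]
      _ ≤ ∑ j ∈ s, Mr⁻¹ * ev j := hgm
      _ = (∑ j ∈ s, ev j) / Mr := by rw [← Finset.mul_sum s ev Mr⁻¹, inv_mul_eq_div]
      _ ≤ T / Mr := by
          have hsub : ∑ j ∈ s, ev j ≤ T := by
            rw [← htrace]
            exact Finset.sum_le_sum_of_subset_of_nonneg (Finset.erase_subset i Finset.univ)
              (fun j _ _ => (hevpos j).le)
          gcongr
  have hP0 : (0:ℝ) ≤ ∏ j ∈ s, ev j := Finset.prod_nonneg fun j _ => (hevpos j).le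
  have hprod : ∏ j ∈ s, ev j ≤ (T / Mr) ^ (Mr : ℝ) := by
    calc ∏ j ∈ s, ev j = ((∏ j ∈ s, ev j) ^ (Mr⁻¹ : ℝ)) ^ (Mr : ℝ) := by
          rw [← Real.rpow_mul hP0, inv_mul_cancel₀ hMr.ne', Real.rpow_one]
      _ ≤ (T / Mr) ^ (Mr : ℝ) :=
          Real.rpow_le_rpow (Real.rpow_nonneg hP0 _) hP hMr.le
  have hkey : d ^ 2 ≤ ev i * (T / Mr) ^ (Mr : ℝ) := by
    calc d ^ 2 = ∏ j, ev j := hdet2.symm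
      _ = ev i * ∏ j ∈ s, ev j := (Finset.mul_prod_erase Finset.univ ev (Finset.mem_univ i)).symm
      _ ≤ ev i * (T / Mr) ^ (Mr : ℝ) := mul_le_mul_of_nonneg_left hprod (hevpos i).le
  have hpowpos : (0:ℝ) < (T / Mr) ^ (Mr : ℝ) := Real.rpow_pos_of_pos (div_pos hTpos hMr) _
  have hinv : (Mr / T) ^ (Mr : ℝ) = ((T / Mr) ^ (Mr : ℝ))⁻¹ := by
    rw [← Real.inv_rpow (div_pos hTpos hMr).le, inv_div]
  have hev_ge : d ^ 2 * (Mr / T) ^ (Mr : ℝ) ≤ ev i := by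
    rw [hinv, ← div_eq_mul_inv, div_le_iff₀ hpowpos]
    exact hkey
  have hsqrt : d * (Mr / T) ^ ((Mr : ℝ) / 2) = Real.sqrt (d ^ 2 * (Mr / T) ^ (Mr : ℝ)) := by
    rw [Real.sqrt_mul (sq_nonneg d), Real.sqrt_sq hd0.le]
    congr 1
    rw [Real.sqrt_eq_rpow, ← Real.rpow_mul (div_nonneg hMr.le hTpos.le)]
    congr 1
    ring
  calc d * (Mr / T) ^ ((Mr : ℝ) / 2) = Real.sqrt (d ^ 2 * (Mr / T) ^ (Mr : ℝ)) := hsqrt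
    _ ≤ Real.sqrt (ev i) := Real.sqrt_le_sqrt hev_ge
    _ = singVals A i := rfl
end

section
/- Let A ∈ M_n(ℂ) have singular values σ₁ ≥ ... ≥ σₙ ≥ 0 and eigenvalues ordered by modulus |λ₁| ≥ ... ≥ |λₙ|. Then |λ₁ · λ₂ ⋯ λₖ| ≤ σ₁ · σ₂ ⋯ σₖ for every k = 1,...,n, with equality for k = n. -/
open Matrix

section WMMaux

open Finset Equiv Polynomial
open scoped ComplexOrder


variable {R : Type*} [CommRing R]

/-- auxiliary: index type for size-k subsets -/
abbrev WMM.Subk (n k : ℕ) := {S : Finset (Fin n) // S.card = k}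

noncomputable def WMM.emb {n k : ℕ} (S : WMM.Subk n k) : Fin k → Fin n :=
  S.1.orderEmbOfFin S.2

theorem WMM.emb_strictMono {n k : ℕ} (S : WMM.Subk n k) : StrictMono (WMM.emb S) :=
  (S.1.orderEmbOfFin S.2).strictMono

theorem WMM.det_mul_aux {k n : ℕ} {M : Matrix (Fin k) (Fin n) R} {N : Matrix (Fin n) (Fin k) R}
    {p : Fin k → Fin n} (H : ¬Function.Injective p) :
    (∑ σ : Perm (Fin k), ((Perm.sign σ : ℤ) : R) * ∏ x, M (σ x) (p x) * N (p x) x) = 0 := by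
  obtain ⟨i, j, hpij, hij⟩ : ∃ i j, p i = p j ∧ i ≠ j := by
    rw [Function.Injective] at H
    push_neg at H
    obtain ⟨i, j, h1, h2⟩ := H
    exact ⟨i, j, h1, h2⟩
  exact Finset.sum_involution (fun σ _ => σ * Equiv.swap i j)
      (fun σ _ => by
        have : (∏ x, M (σ x) (p x)) = ∏ x, M ((σ * Equiv.swap i j) x) (p x) :=
          Fintype.prod_equiv (Equiv.swap i j) _ _ (by simp [Equiv.apply_swap_eq_self hpij])
        simp [this, Perm.sign_swap hij, -Perm.sign_swap', Finset.prod_mul_distrib])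
      (fun σ _ _ => (not_congr Equiv.mul_swap_eq_iff).mpr hij) (fun _ _ => Finset.mem_univ _)
      fun σ _ => Equiv.mul_swap_involutive i j σ

theorem WMM.cauchy_binet {k n : ℕ} (P : Matrix (Fin k) (Fin n) R) (Q : Matrix (Fin n) (Fin k) R) :
    det (P * Q) = ∑ S : WMM.Subk n k,
      det (P.submatrix id (WMM.emb S)) * det (Q.submatrix (WMM.emb S) id) := by
  have step1 : det (P * Q)
      = ∑ p : Fin k → Fin n, ∑ σ : Perm (Fin k),
          ((Perm.sign σ : ℤ) : R) * ∏ i, P (σ i) (p i) * Q (p i) i := by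
    simp only [det_apply', mul_apply, Finset.prod_univ_sum, Finset.mul_sum,
      Fintype.piFinset_univ]
    rw [Finset.sum_comm]
  have step2 : ∑ p : Fin k → Fin n, ∑ σ : Perm (Fin k),
          ((Perm.sign σ : ℤ) : R) * ∏ i, P (σ i) (p i) * Q (p i) i
      = ∑ p ∈ Finset.univ.filter (fun p : Fin k → Fin n => Function.Injective p),
          ∑ σ : Perm (Fin k), ((Perm.sign σ : ℤ) : R) * ∏ i, P (σ i) (p i) * Q (p i) i := by
    refine (Finset.sum_subset (Finset.filter_subset _ _) fun f _ hf => WMM.det_mul_aux ?_).symm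
    simpa only [true_and, Finset.mem_filter, Finset.mem_univ] using hf
  have step3 : ∑ p ∈ Finset.univ.filter (fun p : Fin k → Fin n => Function.Injective p),
          ∑ σ : Perm (Fin k), ((Perm.sign σ : ℤ) : R) * ∏ i, P (σ i) (p i) * Q (p i) i
      = ∑ x : WMM.Subk n k × Perm (Fin k),
          ∑ σ : Perm (Fin k), ((Perm.sign σ : ℤ) : R) *
            ∏ i, P (σ i) (WMM.emb x.1 (x.2 i)) * Q (WMM.emb x.1 (x.2 i)) i := by
    refine (Finset.sum_bij (fun x _ => WMM.emb x.1 ∘ x.2) ?_ ?_ ?_ ?_).symm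
    · intro x _
      simp only [Finset.mem_filter, Finset.mem_univ, true_and]
      exact ((WMM.emb_strictMono x.1).injective).comp x.2.injective
    · intro x _ y _ hxy
      have hS : x.1 = y.1 := by
        have h1 : Set.range (WMM.emb x.1 ∘ x.2) = Set.range (WMM.emb y.1 ∘ y.2) := by
          rw [show WMM.emb x.1 ∘ ⇑x.2 = WMM.emb y.1 ∘ ⇑y.2 from hxy]
        rw [Set.range_comp, Set.range_comp, x.2.range_eq_univ, y.2.range_eq_univ,
          Set.image_univ, Set.image_univ] at h1
        have h2 : (↑x.1.1 : Set (Fin n)) = ↑y.1.1 := by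
          rw [← Finset.range_orderEmbOfFin x.1.1 x.1.2, ← Finset.range_orderEmbOfFin y.1.1 y.1.2]
          exact h1
        exact Subtype.ext (Finset.coe_injective h2)
      have hperm : x.2 = y.2 := by
        apply Equiv.ext; intro i
        apply (WMM.emb_strictMono x.1).injective
        have := congrFun hxy i
        simp only [Function.comp_apply] at this
        rw [this, hS]
      exact Prod.ext hS hperm
    · intro p hp
      simp only [Finset.mem_filter, Finset.mem_univ, true_and] at hp
      set S : Finset (Fin n) := Finset.univ.image p with hSdef
      have hcard : S.card = k := by
        rw [hSdef, Finset.card_image_of_injective _ hp, Finset.card_univ, Fintype.card_fin]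
      have hrange : Set.range p = ↑S := by
        rw [hSdef]; ext x; simp [Set.mem_range]
      let τ : Fin k ≃ Fin k :=
        (Equiv.ofInjective p hp).trans ((Equiv.setCongr hrange).trans
          (S.orderIsoOfFin hcard).symm.toEquiv)
      refine ⟨(⟨S, hcard⟩, τ), Finset.mem_univ _, ?_⟩
      funext i
      show WMM.emb ⟨S, hcard⟩ (τ i) = p i
      have h1 : WMM.emb ⟨S, hcard⟩ (τ i) = ((S.orderIsoOfFin hcard) (τ i) : Fin n) := by
        rw [WMM.emb]; exact (Finset.coe_orderIsoOfFin_apply S hcard (τ i)).symm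
      rw [h1]
      simp only [τ, Equiv.trans_apply]
      exact congrArg Subtype.val ((S.orderIsoOfFin hcard).apply_symm_apply
        ((Equiv.setCongr hrange) ((Equiv.ofInjective p hp) i)))
    · intro x _; rfl
  have step4 : ∀ (S : WMM.Subk n k) (τ : Perm (Fin k)),
      ∑ σ : Perm (Fin k), ((Perm.sign σ : ℤ) : R) *
          ∏ i, P (σ i) (WMM.emb S (τ i)) * Q (WMM.emb S (τ i)) i
        = ((Perm.sign τ : ℤ) : R) * det (P.submatrix id (WMM.emb S)) *
            ∏ i, Q (WMM.emb S (τ i)) i := by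
    intro S τ
    have : ∀ σ : Perm (Fin k),
        (∏ i, P (σ i) (WMM.emb S (τ i)) * Q (WMM.emb S (τ i)) i)
          = (∏ i, P (σ i) (WMM.emb S (τ i))) * ∏ i, Q (WMM.emb S (τ i)) i :=
      fun σ => Finset.prod_mul_distrib
    simp_rw [this, ← mul_assoc]
    rw [← Finset.sum_mul]
    congr 1
    have hdet : det ((P.submatrix id (WMM.emb S)).submatrix id τ)
        = ((Perm.sign τ : ℤ) : R) * det (P.submatrix id (WMM.emb S)) := by
      have := Matrix.det_permute' τ (P.submatrix id (WMM.emb S))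
      simpa using this
    rw [← hdet, Matrix.submatrix_submatrix]
    rw [Matrix.det_apply']
    rfl
  rw [step1, step2, step3]
  rw [Fintype.sum_prod_type]
  refine Finset.sum_congr rfl fun S _ => ?_
  calc ∑ τ : Perm (Fin k), ∑ σ : Perm (Fin k), ((Perm.sign σ : ℤ) : R) *
          ∏ i, P (σ i) (WMM.emb S (τ i)) * Q (WMM.emb S (τ i)) i
      = ∑ τ : Perm (Fin k), ((Perm.sign τ : ℤ) : R) * det (P.submatrix id (WMM.emb S)) *
          ∏ i, Q (WMM.emb S (τ i)) i := by
        exact Finset.sum_congr rfl fun τ _ => step4 S τ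
    _ = det (P.submatrix id (WMM.emb S)) * ∑ τ : Perm (Fin k), ((Perm.sign τ : ℤ) : R) *
          ∏ i, Q (WMM.emb S (τ i)) i := by
        rw [Finset.mul_sum]; exact Finset.sum_congr rfl fun τ _ => by ring
    _ = det (P.submatrix id (WMM.emb S)) * det (Q.submatrix (WMM.emb S) id) := by
        rw [Matrix.det_apply' (M := P.submatrix id (WMM.emb S)),
          Matrix.det_apply' (M := Q.submatrix (WMM.emb S) id)]
        rfl

namespace WMM


theorem charpoly_conj {n : ℕ} (A U B : Matrix (Fin n) (Fin n) ℂ)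
    (h1 : B * U = 1) : (B * A * U).charpoly = A.charpoly := by
  have hC : ∀ M N : Matrix (Fin n) (Fin n) ℂ,
      (M * N).map (C : ℂ →+* ℂ[X]) = M.map C * N.map C := fun M N => Matrix.map_mul
  have hone : (1 : Matrix (Fin n) (Fin n) ℂ).map (C : ℂ →+* ℂ[X]) = 1 :=
    Matrix.map_one _ (map_zero C) (map_one C)
  have hBU : B.map (C : ℂ →+* ℂ[X]) * U.map C = 1 := by rw [← hC, h1, hone]
  have key : charmatrix (B * A * U) = B.map C * charmatrix A * U.map C := by
    rw [charmatrix, charmatrix]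
    rw [Matrix.mul_sub, Matrix.sub_mul]
    congr 1
    · rw [Matrix.mul_assoc, Matrix.scalar_commute (X : ℂ[X]) (fun r => Commute.all _ _) (U.map C),
        ← Matrix.mul_assoc, hBU, Matrix.one_mul]
    · rw [RingHom.mapMatrix_apply, RingHom.mapMatrix_apply, ← hC, ← hC]
  rw [Matrix.charpoly, Matrix.charpoly, key, Matrix.det_mul, Matrix.det_mul]
  have : (B.map (C : ℂ →+* ℂ[X])).det * (U.map C).det = 1 := by
    rw [← Matrix.det_mul, hBU, Matrix.det_one]
  calc (B.map (C : ℂ →+* ℂ[X])).det * (charmatrix A).det * (U.map C).det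
      = (charmatrix A).det * ((B.map (C : ℂ →+* ℂ[X])).det * (U.map C).det) := by ring
    _ = (charmatrix A).det := by rw [this, mul_one]

theorem exists_eigen {n : ℕ} (A : Matrix (Fin n) (Fin n) ℂ) {μ : ℂ}
    (h : μ ∈ A.charpoly.roots) : ∃ v : Fin n → ℂ, v ≠ 0 ∧ A.mulVec v = μ • v := by
  have hroot : A.charpoly.IsRoot μ :=
    (Polynomial.mem_roots (A.charpoly_monic.ne_zero)).mp h
  have hdet : Matrix.det (μ • (1 : Matrix (Fin n) (Fin n) ℂ) - A) = 0 := by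
    have h1 : (charmatrix A).map (Polynomial.evalRingHom μ)
        = μ • (1 : Matrix (Fin n) (Fin n) ℂ) - A := by
      ext i j
      by_cases hij : i = j
      · subst hij
        simp [charmatrix_apply_eq, Matrix.one_apply, Matrix.sub_apply]
      · simp [charmatrix_apply_ne _ _ _ hij, Matrix.one_apply_ne hij, Matrix.sub_apply]
    have h2 := (RingHom.map_det (Polynomial.evalRingHom μ) (charmatrix A)).symm
    rw [RingHom.mapMatrix_apply, h1] at h2
    rw [h2]
    simpa [Matrix.charpoly] using hroot
  obtain ⟨v, hv0, hv⟩ := (Matrix.exists_mulVec_eq_zero_iff).mpr hdet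
  refine ⟨v, hv0, ?_⟩
  rw [Matrix.sub_mulVec, Matrix.smul_mulVec, Matrix.one_mulVec, sub_eq_zero] at hv
  exact hv.symm

theorem exists_unitary_col {n : ℕ} (v : Fin (n + 1) → ℂ) (hv : v ≠ 0) :
    ∃ U : Matrix (Fin (n + 1)) (Fin (n + 1)) ℂ, Uᴴ * U = 1 ∧
      ∃ c : ℂ, c ≠ 0 ∧ ∀ i, U i 0 = c * v i := by
  classical
  set E := EuclideanSpace ℂ (Fin (n + 1))
  set w : E := (WithLp.equiv 2 (Fin (n+1) → ℂ)).symm v with hw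
  have hw0 : w ≠ 0 := by
    intro h; apply hv
    have := congrArg (WithLp.equiv 2 (Fin (n+1) → ℂ)) h
    simpa [hw] using this
  have hnw : ‖w‖ ≠ 0 := norm_ne_zero_iff.mpr hw0
  set u : E := (‖w‖⁻¹ : ℂ) • w with hu
  have hun : ‖u‖ = 1 := by
    rw [hu, norm_smul]
    simp [norm_inv, hnw]
    rw [abs_norm, inv_mul_cancel₀ hnw]
  have horth : Orthonormal ℂ (Set.restrict ({0} : Set (Fin (n+1))) (fun _ => u)) := by
    constructor
    · intro i; exact hun
    · intro i j hij
      exact absurd (Subtype.ext (by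
        have hi := i.2; have hj := j.2
        simp only [Set.mem_singleton_iff] at hi hj
        rw [hi, hj])) hij
  obtain ⟨b, hb⟩ := Orthonormal.exists_orthonormalBasis_extension_of_card_eq
    (by simp [E]) horth
  have hb0 : b 0 = u := hb 0 rfl
  refine ⟨Matrix.of (fun i j => b j i), ?_, (‖w‖⁻¹ : ℂ), by simpa using hnw, ?_⟩
  · ext i j
    have := orthonormal_iff_ite.mp b.orthonormal i j
    rw [PiLp.inner_apply] at this
    simp only [RCLike.inner_apply] at this
    simp only [Matrix.mul_apply, Matrix.conjTranspose_apply, Matrix.of_apply, Matrix.one_apply]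
    rw [← this]
    exact Finset.sum_congr rfl fun _ _ => mul_comm _ _
  · intro i
    show b 0 i = (‖w‖⁻¹ : ℂ) * v i
    rw [hb0, hu]
    simp only [PiLp.smul_apply, smul_eq_mul]
    rfl


theorem schur : ∀ (n : ℕ) (A : Matrix (Fin n) (Fin n) ℂ) (l : Fin n → ℂ),
    A.charpoly.roots = Multiset.map l Finset.univ.val →
    ∃ U : Matrix (Fin n) (Fin n) ℂ, Uᴴ * U = 1 ∧
      (∀ i j : Fin n, j < i → (Uᴴ * A * U) i j = 0) ∧ (∀ i, (Uᴴ * A * U) i i = l i) := by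
  intro n
  induction n with
  | zero =>
    intro A l _
    exact ⟨1, by simp, fun i => i.elim0, fun i => i.elim0⟩
  | succ n ih =>
    intro A l hl
    have h0 : l 0 ∈ A.charpoly.roots := by
      rw [hl]
      exact Multiset.mem_map.mpr ⟨0, Finset.mem_univ_val _, rfl⟩
    obtain ⟨v, hv0, hv⟩ := exists_eigen A h0
    obtain ⟨U₁, hU₁, c, hc, hcol⟩ := exists_unitary_col v hv0
    set A₁ : Matrix (Fin (n+1)) (Fin (n+1)) ℂ := U₁ᴴ * A * U₁ with hA₁def
    have hAU : ∀ i, (A * U₁) i 0 = l 0 * U₁ i 0 := by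
      intro i
      rw [Matrix.mul_apply]
      calc ∑ m, A i m * U₁ m 0 = ∑ m, A i m * (c * v m) :=
            Finset.sum_congr rfl fun m _ => by rw [hcol m]
        _ = c * ∑ m, A i m * v m := by
            rw [Finset.mul_sum]; exact Finset.sum_congr rfl fun m _ => by ring
        _ = c * (A.mulVec v i) := rfl
        _ = c * (l 0 * v i) := by rw [hv]; rfl
        _ = l 0 * (c * v i) := by ring
        _ = l 0 * U₁ i 0 := by rw [hcol i]
    have hA₁0 : ∀ i, A₁ i 0 = l 0 * (1 : Matrix (Fin (n+1)) (Fin (n+1)) ℂ) i 0 := by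
      intro i
      have hassoc : A₁ = U₁ᴴ * (A * U₁) := by rw [hA₁def, Matrix.mul_assoc]
      rw [hassoc, Matrix.mul_apply]
      calc ∑ m, U₁ᴴ i m * (A * U₁) m 0
          = ∑ m, star (U₁ m i) * (l 0 * U₁ m 0) :=
            Finset.sum_congr rfl fun m _ => by rw [Matrix.conjTranspose_apply, hAU m]
        _ = l 0 * ∑ m, star (U₁ m i) * U₁ m 0 := by
            rw [Finset.mul_sum]; exact Finset.sum_congr rfl fun m _ => by ring
        _ = l 0 * (U₁ᴴ * U₁) i 0 := by rw [Matrix.mul_apply]; rfl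
        _ = l 0 * (1 : Matrix (Fin (n+1)) (Fin (n+1)) ℂ) i 0 := by rw [hU₁]
    have hA₁succ0 : ∀ m : Fin n, A₁ m.succ 0 = 0 := by
      intro m
      rw [hA₁0, Matrix.one_apply_ne (Fin.succ_ne_zero m), mul_zero]
    have hA₁00 : A₁ 0 0 = l 0 := by
      rw [hA₁0, Matrix.one_apply_eq, mul_one]
    have hcp1 : A₁.charpoly = A.charpoly := charpoly_conj A U₁ U₁ᴴ hU₁
    set A₂ : Matrix (Fin n) (Fin n) ℂ := Matrix.of (fun i j => A₁ i.succ j.succ) with hA₂def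
    have hminor : (charmatrix A₁).submatrix Fin.succ Fin.succ = charmatrix A₂ := by
      ext i j
      by_cases hij : i = j
      · subst hij
        rw [Matrix.submatrix_apply, charmatrix_apply_eq, charmatrix_apply_eq]
        rfl
      · have hij' : i.succ ≠ j.succ := fun hh => hij (Fin.succ_injective _ hh)
        rw [Matrix.submatrix_apply, charmatrix_apply_ne _ _ _ hij', charmatrix_apply_ne _ _ _ hij]
        rfl
    have hcp2 : A₁.charpoly = (X - C (l 0)) * A₂.charpoly := by
      rw [Matrix.charpoly, Matrix.det_succ_column_zero, Fin.sum_univ_succ]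
      have hrest : ∀ i : Fin n, (-1 : ℂ[X]) ^ ((i.succ : Fin (n+1)) : ℕ) * charmatrix A₁ i.succ 0 *
          ((charmatrix A₁).submatrix i.succ.succAbove Fin.succ).det = 0 := by
        intro i
        rw [charmatrix_apply_ne _ _ _ (Fin.succ_ne_zero i), hA₁succ0 i]
        simp
      rw [Finset.sum_eq_zero fun i _ => hrest i, add_zero]
      rw [charmatrix_apply_eq, hA₁00]
      rw [Fin.succAbove_zero, hminor]
      simp [Matrix.charpoly]
    have hlroots : Multiset.map l Finset.univ.val
        = l 0 ::ₘ Multiset.map (fun i : Fin n => l i.succ) Finset.univ.val := by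
      rw [Fin.univ_succ, Finset.cons_val, Multiset.map_cons, Finset.map_val, Multiset.map_map]
      rfl
    have hroots2 : A₂.charpoly.roots = Multiset.map (fun i : Fin n => l i.succ) Finset.univ.val := by
      have hA : A.charpoly = (X - C (l 0)) * A₂.charpoly := by rw [← hcp1, hcp2]
      have hsplit : A.charpoly.roots = (X - C (l 0)).roots + A₂.charpoly.roots := by
        rw [hA, Polynomial.roots_mul
          (mul_ne_zero (Polynomial.X_sub_C_ne_zero (l 0)) A₂.charpoly_monic.ne_zero)]
      rw [hl, hlroots, Polynomial.roots_X_sub_C, Multiset.singleton_add] at hsplit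
      exact ((Multiset.cons_inj_right _).mp hsplit).symm
    obtain ⟨U₂, hU₂, htr₂, hd₂⟩ := ih A₂ (fun i => l i.succ) hroots2
    set V : Matrix (Fin (n+1)) (Fin (n+1)) ℂ :=
      Matrix.of (Fin.cons (Fin.cons 1 (fun _ => 0)) (fun i => Fin.cons 0 (fun j => U₂ i j)))
      with hVdef
    have hV00 : V 0 0 = 1 := by simp [hVdef]
    have hV0s : ∀ j : Fin n, V 0 j.succ = 0 := fun j => by simp [hVdef]
    have hVs0 : ∀ i : Fin n, V i.succ 0 = 0 := fun i => by simp [hVdef]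
    have hVss : ∀ i j : Fin n, V i.succ j.succ = U₂ i j := fun i j => by simp [hVdef]
    have hVV : Vᴴ * V = 1 := by
      ext i j
      rw [Matrix.mul_apply, Fin.sum_univ_succ]
      simp only [Matrix.conjTranspose_apply]
      induction i using Fin.cases with
      | zero =>
        induction j using Fin.cases with
        | zero => simp [hV00, hVs0, Matrix.one_apply_eq]
        | succ j' =>
          rw [hV00, hV0s j', Matrix.one_apply_ne (Fin.succ_ne_zero j').symm]
          simp [hVs0]
      | succ i' =>
        induction j using Fin.cases with
        | zero =>
          rw [hV00, hV0s i', Matrix.one_apply_ne (Fin.succ_ne_zero i')]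
          simp [hVs0]
        | succ j' =>
          rw [hV0s i', hV0s j']
          have : ∑ m : Fin n, star (V m.succ i'.succ) * V m.succ j'.succ
              = (U₂ᴴ * U₂) i' j' := by
            rw [Matrix.mul_apply]
            exact Finset.sum_congr rfl fun m _ => by
              rw [hVss m i', hVss m j', Matrix.conjTranspose_apply]
          rw [this, hU₂]
          by_cases hij : i' = j'
          · subst hij; simp [Matrix.one_apply_eq]
          · rw [Matrix.one_apply_ne hij,
              Matrix.one_apply_ne (fun hh => hij (Fin.succ_injective _ hh))]
            simp
    have hW0 : ∀ m, (A₁ * V) m 0 = A₁ m 0 := by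
      intro m
      rw [Matrix.mul_apply, Fin.sum_univ_succ, hV00, mul_one]
      rw [Finset.sum_eq_zero fun m' _ => by rw [hVs0 m', mul_zero], add_zero]
    have hWs : ∀ m (j : Fin n), (A₁ * V) m j.succ = ∑ j', A₁ m j'.succ * U₂ j' j := by
      intro m j
      rw [Matrix.mul_apply, Fin.sum_univ_succ, hV0s j, mul_zero, zero_add]
      exact Finset.sum_congr rfl fun j' _ => by rw [hVss j' j]
    have hT0 : ∀ j, (Vᴴ * (A₁ * V)) 0 j = (A₁ * V) 0 j := by
      intro j
      rw [Matrix.mul_apply, Fin.sum_univ_succ, Matrix.conjTranspose_apply, hV00, star_one, one_mul]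
      rw [Finset.sum_eq_zero fun m _ => by
        rw [Matrix.conjTranspose_apply, hVs0 m, star_zero, zero_mul], add_zero]
    have hTs : ∀ (i : Fin n) j, (Vᴴ * (A₁ * V)) i.succ j
        = ∑ m, star (U₂ m i) * (A₁ * V) m.succ j := by
      intro i j
      rw [Matrix.mul_apply, Fin.sum_univ_succ, Matrix.conjTranspose_apply, hV0s i, star_zero,
        zero_mul, zero_add]
      exact Finset.sum_congr rfl fun m _ => by rw [Matrix.conjTranspose_apply, hVss m i]
    have hT2 : ∀ i j : Fin n, (Vᴴ * (A₁ * V)) i.succ j.succ = (U₂ᴴ * A₂ * U₂) i j := by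
      intro i j
      rw [hTs i j.succ, Matrix.mul_assoc U₂ᴴ A₂ U₂, Matrix.mul_apply]
      refine Finset.sum_congr rfl fun m _ => ?_
      rw [hWs m.succ j, Matrix.mul_apply, Matrix.conjTranspose_apply]
      congr 1
    have hT : (U₁ * V)ᴴ * A * (U₁ * V) = Vᴴ * (A₁ * V) := by
      rw [Matrix.conjTranspose_mul, hA₁def]
      simp only [Matrix.mul_assoc]
    refine ⟨U₁ * V, ?_, ?_, ?_⟩
    · rw [Matrix.conjTranspose_mul, Matrix.mul_assoc, ← Matrix.mul_assoc U₁ᴴ U₁ V, hU₁,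
        Matrix.one_mul, hVV]
    · intro i j hij
      rw [hT]
      induction i using Fin.cases with
      | zero => exact absurd hij (by simp)
      | succ i' =>
        induction j using Fin.cases with
        | zero =>
          rw [hTs i' 0]
          exact Finset.sum_eq_zero fun m _ => by rw [hW0 m.succ, hA₁succ0 m, mul_zero]
        | succ j' =>
          rw [hT2 i' j', htr₂ i' j' (by exact_mod_cast Fin.succ_lt_succ_iff.mp hij)]
    · intro i
      rw [hT]
      induction i using Fin.cases with
      | zero => rw [hT0 0, hW0 0, hA₁00]
      | succ i' => rw [hT2 i' i', hd₂ i']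


theorem prod_filter_lt {M : Type*} [CommMonoid M] {n k : ℕ} (hk : k ≤ n) (f : Fin n → M) :
    ∏ i ∈ Finset.univ.filter (fun i : Fin n => (i : ℕ) < k), f i
      = ∏ a : Fin k, f (Fin.castLE hk a) := by
  refine Finset.prod_bij'
    (i := fun i (hi : i ∈ Finset.univ.filter (fun i : Fin n => (i : ℕ) < k)) =>
      (⟨(i : ℕ), (Finset.mem_filter.mp hi).2⟩ : Fin k))
    (j := fun a _ => Fin.castLE hk a) (hi := fun i hi => Finset.mem_univ _)
    (hj := fun a _ => Finset.mem_filter.mpr ⟨Finset.mem_univ _, a.2⟩)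
    (left_inv := fun i hi => rfl) (right_inv := fun a _ => rfl) (h := fun i hi => rfl)

theorem strictMono_le {k n : ℕ} {g : Fin k → Fin n} (hg : StrictMono g) (a : Fin k) :
    (a : ℕ) ≤ (g a : ℕ) := by
  suffices H : ∀ m : ℕ, ∀ h : m < k, m ≤ (g ⟨m, h⟩ : ℕ) by
    simpa using H (a : ℕ) a.2
  intro m
  induction m with
  | zero => intro h; exact Nat.zero_le _
  | succ m ihm =>
    intro h
    have hm : m < k := Nat.lt_of_succ_lt h
    have hlt : g ⟨m, hm⟩ < g ⟨m + 1, h⟩ := hg (by exact Fin.mk_lt_mk.mpr (Nat.lt_succ_self m))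
    have := ihm hm
    omega

theorem prod_inj_le {n k : ℕ} (hk : k ≤ n) (w : Fin n → ℝ) (hw : Antitone w)
    (hw0 : ∀ i, 0 ≤ w i) (f : Fin k → Fin n) (hf : Function.Injective f) :
    ∏ a : Fin k, w (f a) ≤ ∏ a : Fin k, w (Fin.castLE hk a) := by
  classical
  set S : Finset (Fin n) := Finset.univ.image f with hS
  have hcard : S.card = k := by
    rw [hS, Finset.card_image_of_injective _ hf, Finset.card_univ, Fintype.card_fin]
  set g : Fin k → Fin n := ⇑(S.orderEmbOfFin hcard) with hg
  have h1 : ∏ a : Fin k, w (f a) = ∏ x ∈ S, w x := by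
    rw [hS, Finset.prod_image (fun a _ b _ h => hf h)]
  have h2 : ∏ x ∈ S, w x = ∏ a : Fin k, w (g a) := by
    have himg : Finset.univ.image g = S := by
      apply Finset.coe_injective
      rw [Finset.coe_image, Finset.coe_univ, Set.image_univ, hg, Finset.range_orderEmbOfFin]
    rw [← himg, Finset.prod_image (fun a _ b _ h => (S.orderEmbOfFin hcard).injective h)]
  rw [h1, h2]
  refine Finset.prod_le_prod (fun a _ => hw0 _) (fun a _ => ?_)
  refine hw ?_
  have := strictMono_le (S.orderEmbOfFin hcard).strictMono a
  exact Fin.le_def.mpr (by simpa using this)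

theorem sqrt_prod {ι : Type*} (t : Finset ι) (f : ι → ℝ) (hf : ∀ i ∈ t, 0 ≤ f i) :
    ∏ i ∈ t, Real.sqrt (f i) = Real.sqrt (∏ i ∈ t, f i) := by
  classical
  induction t using Finset.induction_on with
  | empty => simp
  | insert a t0 hnotmem ih =>
    rw [Finset.prod_insert hnotmem, Finset.prod_insert hnotmem,
      Real.sqrt_mul (hf a (Finset.mem_insert_self a t0)),
      ih (fun i hi => hf i (Finset.mem_insert_of_mem hi))]


noncomputable def singVals {n : ℕ} (A : Matrix (Fin n) (Fin n) ℂ) : Fin n → ℝ :=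
  fun i => Real.sqrt ((Matrix.isHermitian_conjTranspose_mul_self A).eigenvalues i)

theorem weyl' (n : ℕ) (A : Matrix (Fin n) (Fin n) ℂ)
    (l : Fin n → ℂ) (hl : A.charpoly.roots = Multiset.map l Finset.univ.val)
    (hlmono : Antitone fun i => ‖l i‖)
    (s : Fin n → ℝ) (hsmono : Antitone s)
    (hse : ∃ e : Equiv.Perm (Fin n), s = singVals A ∘ e) :
    (∀ k : ℕ, k ≤ n →
      ‖∏ i ∈ Finset.univ.filter (fun i : Fin n => (i : ℕ) < k), l i‖ ≤
        ∏ i ∈ Finset.univ.filter (fun i : Fin n => (i : ℕ) < k), s i) ∧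
      ‖∏ i, l i‖ = ∏ i, s i := by
  classical
  obtain ⟨e, hse⟩ := hse
  have hM : (Aᴴ * A).IsHermitian := Matrix.isHermitian_conjTranspose_mul_self A
  set d : Fin n → ℝ := hM.eigenvalues with hd
  have hd0 : ∀ i, 0 ≤ d i := fun i =>
    (Matrix.posSemidef_conjTranspose_mul_self A).eigenvalues_nonneg i
  have hsd : ∀ i, s i = Real.sqrt (d (e i)) := fun i => by rw [hse]; rfl
  have hs0 : ∀ i, 0 ≤ s i := fun i => by rw [hsd]; exact Real.sqrt_nonneg _
  have hs2 : ∀ i, s i ^ 2 = d (e i) := fun i => by rw [hsd]; exact Real.sq_sqrt (hd0 _)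
  have habs2 : ∀ z : ℂ, star z * z = ((‖z‖ ^ 2 : ℝ) : ℂ) := fun z => by
    rw [Complex.sq_norm]; exact Complex.normSq_eq_conj_mul_self.symm
  -- equality part
  have h1 : ∏ i, l i = A.det := by
    rw [Matrix.det_eq_prod_roots_charpoly, hl, Finset.prod_eq_multiset_prod]
  have hprodd : ∏ i, d i = ‖A.det‖ ^ 2 := by
    have h2 : (Aᴴ * A).det = ((∏ i, d i : ℝ) : ℂ) := by
      rw [hM.det_eq_prod_eigenvalues]
      push_cast
      try rfl
    have h3 : (Aᴴ * A).det = ((‖A.det‖ ^ 2 : ℝ) : ℂ) := by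
      rw [Matrix.det_mul, Matrix.det_conjTranspose, ← habs2]
      try rfl
    exact Complex.ofReal_injective (h2.symm.trans h3)
  have hprods : ∏ i, s i = ‖A.det‖ := by
    calc ∏ i, s i = ∏ i, Real.sqrt (d (e i)) := Finset.prod_congr rfl fun i _ => hsd i
      _ = ∏ j, Real.sqrt (d j) := Equiv.prod_comp e (fun j => Real.sqrt (d j))
      _ = Real.sqrt (∏ j, d j) := sqrt_prod _ _ (fun i _ => hd0 i)
      _ = Real.sqrt (‖A.det‖ ^ 2) := by rw [hprodd]
      _ = ‖A.det‖ := Real.sqrt_sq (norm_nonneg _)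
  refine ⟨?_, by rw [h1, hprods]⟩
  -- inequality part
  intro k hk
  obtain ⟨U, hU, htr, hdiag⟩ := schur n A l hl
  set c : Fin k → Fin n := Fin.castLE hk with hc
  set B : Matrix (Fin n) (Fin k) ℂ := U.submatrix id c with hB
  have hBB : Bᴴ * B = 1 := by
    ext a b
    have heq : (Bᴴ * B) a b = (Uᴴ * U) (c a) (c b) := by
      rw [Matrix.mul_apply, Matrix.mul_apply]
      exact Finset.sum_congr rfl fun m _ => rfl
    rw [heq, hU]
    by_cases hab : a = b
    · subst hab; rw [Matrix.one_apply_eq, Matrix.one_apply_eq]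
      try rfl
    · rw [Matrix.one_apply_ne hab,
        Matrix.one_apply_ne (fun hh => hab (Fin.castLE_injective hk hh))]
  have hsubT : Bᴴ * A * B = (Uᴴ * A * U).submatrix c c := by
    ext a b
    rw [Matrix.mul_assoc, Matrix.mul_apply, Matrix.submatrix_apply,
      Matrix.mul_assoc, Matrix.mul_apply]
    refine Finset.sum_congr rfl fun m _ => ?_
    congr 1
  have hdetT : det (Bᴴ * A * B) = ∏ a : Fin k, l (c a) := by
    rw [hsubT]
    rw [Matrix.det_of_upperTriangular (by
      intro a b hba
      rw [Matrix.submatrix_apply]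
      exact htr (c a) (c b) hba)]
    exact Finset.prod_congr rfl fun a _ => by
      rw [Matrix.submatrix_apply]; exact hdiag (c a)
  set D : Matrix (Fin n) (Fin n) ℂ := Matrix.diagonal (RCLike.ofReal ∘ d) with hD
  set V : Matrix (Fin n) (Fin n) ℂ := (hM.eigenvectorUnitary : Matrix (Fin n) (Fin n) ℂ) with hV
  have hspec : Aᴴ * A = V * D * Vᴴ := by
    have h := hM.spectral_theorem
    rw [Unitary.conjStarAlgAut_apply, Matrix.star_eq_conjTranspose] at h
    exact h
  have hVV : V * Vᴴ = 1 := by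
    have h := Matrix.mem_unitaryGroup_iff.mp (hM.eigenvectorUnitary).2
    rwa [Matrix.star_eq_conjTranspose] at h
  set P : Matrix (Fin n) (Fin k) ℂ := Vᴴ * B with hP
  have hPP : Pᴴ * P = 1 := by
    rw [hP, Matrix.conjTranspose_mul, Matrix.conjTranspose_conjTranspose,
      Matrix.mul_assoc, ← Matrix.mul_assoc V Vᴴ B, hVV, Matrix.one_mul, hBB]
  have hABAB : (A * B)ᴴ * (A * B) = Pᴴ * (D * P) := by
    rw [Matrix.conjTranspose_mul, Matrix.mul_assoc Bᴴ Aᴴ (A * B),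
      ← Matrix.mul_assoc Aᴴ A B, hspec, hP, Matrix.conjTranspose_mul,
      Matrix.conjTranspose_conjTranspose]
    simp only [Matrix.mul_assoc]
  set bb : Subk n k → ℂ := fun S => det (B.submatrix (emb S) id) with hbb
  set ab : Subk n k → ℂ := fun S => det ((A * B).submatrix (emb S) id) with hab
  set pp : Subk n k → ℂ := fun S => det (P.submatrix (emb S) id) with hpp
  have key1 : ∀ N : Matrix (Fin n) (Fin k) ℂ, Nᴴ * N = 1 →
      ∑ S : Subk n k, ‖det (N.submatrix (emb S) id)‖ ^ 2 = 1 := by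
    intro N hN
    have h1' : (1 : ℂ) = ∑ S : Subk n k,
        star (det (N.submatrix (emb S) id)) * det (N.submatrix (emb S) id) := by
      have hcb := cauchy_binet Nᴴ N
      rw [hN, Matrix.det_one] at hcb
      rw [hcb]
      refine Finset.sum_congr rfl fun S _ => ?_
      rw [← Matrix.conjTranspose_submatrix, Matrix.det_conjTranspose]
    have h3 : ((∑ S : Subk n k, ‖det (N.submatrix (emb S) id)‖ ^ 2 : ℝ) : ℂ)
        = 1 := by
      rw [Complex.ofReal_sum, h1']
      exact Finset.sum_congr rfl fun S _ => (habs2 _).symm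
    exact_mod_cast h3
  have hB1 := key1 B hBB
  have hP1 := key1 P hPP
  have hdet_sum : det (Bᴴ * A * B) = ∑ S : Subk n k, star (bb S) * ab S := by
    rw [Matrix.mul_assoc, cauchy_binet Bᴴ (A * B)]
    refine Finset.sum_congr rfl fun S _ => ?_
    rw [← Matrix.conjTranspose_submatrix, Matrix.det_conjTranspose]
  have habsle : ‖det (Bᴴ * A * B)‖
      ≤ ∑ S : Subk n k, ‖bb S‖ * ‖ab S‖ := by
    rw [hdet_sum]
    refine le_trans (norm_sum_le _ _) ?_
    refine le_of_eq (Finset.sum_congr rfl fun S _ => ?_)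
    rw [show star (bb S) = (starRingEnd ℂ) (bb S) from rfl, norm_mul, Complex.norm_conj]
  have hABsum : ∑ S : Subk n k, ‖ab S‖ ^ 2
      = ∑ S : Subk n k, (∏ a : Fin k, d (emb S a)) * ‖pp S‖ ^ 2 := by
    have h4 : ((∑ S : Subk n k, ‖ab S‖ ^ 2 : ℝ) : ℂ)
        = ((∑ S : Subk n k, (∏ a : Fin k, d (emb S a)) * ‖pp S‖ ^ 2 : ℝ) : ℂ) := by
      rw [Complex.ofReal_sum, Complex.ofReal_sum]
      calc ∑ S : Subk n k, ((‖ab S‖ ^ 2 : ℝ) : ℂ)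
          = ∑ S : Subk n k, star (ab S) * ab S :=
            Finset.sum_congr rfl fun S _ => (habs2 _).symm
        _ = det ((A * B)ᴴ * (A * B)) := by
            rw [cauchy_binet (A * B)ᴴ (A * B)]
            exact (Finset.sum_congr rfl fun S _ => by
              rw [← Matrix.conjTranspose_submatrix, Matrix.det_conjTranspose]).symm
        _ = det (Pᴴ * (D * P)) := by rw [hABAB]
        _ = ∑ S : Subk n k, det (Pᴴ.submatrix id (emb S)) * det ((D * P).submatrix (emb S) id) :=
            cauchy_binet Pᴴ (D * P)
        _ = ∑ S : Subk n k, ((((∏ a : Fin k, d (emb S a)) * ‖pp S‖ ^ 2 : ℝ)) : ℂ) := by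
            refine Finset.sum_congr rfl fun S _ => ?_
            have hDP : (D * P).submatrix (emb S) id
                = Matrix.diagonal (fun a : Fin k => ((d (emb S a) : ℝ) : ℂ))
                  * P.submatrix (emb S) id := by
              ext a b
              rw [Matrix.submatrix_apply, hD, Matrix.diagonal_mul, Matrix.diagonal_mul,
                Matrix.submatrix_apply]
              rfl
            rw [hDP, Matrix.det_mul, Matrix.det_diagonal,
              ← Matrix.conjTranspose_submatrix, Matrix.det_conjTranspose]
            rw [show star (det (P.submatrix (emb S) id))
                  * ((∏ a : Fin k, ((d (emb S a) : ℝ) : ℂ)) * det (P.submatrix (emb S) id))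
                = (∏ a : Fin k, ((d (emb S a) : ℝ) : ℂ))
                  * (star (det (P.submatrix (emb S) id)) * det (P.submatrix (emb S) id)) from by
                ring, habs2]
            push_cast
            ring
    exact_mod_cast h4
  -- combinatorial bound
  set w : Fin n → ℝ := fun i => s i ^ 2 with hw
  have hwanti : Antitone w := fun x y hxy => by
    simp only [hw]
    exact pow_le_pow_left₀ (hs0 y) (hsmono hxy) 2
  have hw0 : ∀ i, 0 ≤ w i := fun i => sq_nonneg _
  have hdw : ∀ j, d j = w (e.symm j) := fun j => by
    rw [hw]; show d j = s (e.symm j) ^ 2; rw [hs2, Equiv.apply_symm_apply]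
  have hSbound : ∀ S : Subk n k, ∏ a : Fin k, d (emb S a) ≤ ∏ a : Fin k, w (c a) := by
    intro S
    calc ∏ a : Fin k, d (emb S a) = ∏ a : Fin k, w (e.symm (emb S a)) :=
          Finset.prod_congr rfl fun a _ => hdw _
      _ ≤ ∏ a : Fin k, w (c a) :=
          prod_inj_le hk w hwanti hw0 (fun a => e.symm (emb S a))
            (fun a b hab => (emb_strictMono S).injective (e.symm.injective hab))
  have hsum_bound : ∑ S : Subk n k, (∏ a : Fin k, d (emb S a)) * ‖pp S‖ ^ 2
      ≤ ∏ a : Fin k, w (c a) := by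
    calc ∑ S : Subk n k, (∏ a : Fin k, d (emb S a)) * ‖pp S‖ ^ 2
        ≤ ∑ S : Subk n k, (∏ a : Fin k, w (c a)) * ‖pp S‖ ^ 2 :=
          Finset.sum_le_sum fun S _ =>
            mul_le_mul_of_nonneg_right (hSbound S) (sq_nonneg _)
      _ = (∏ a : Fin k, w (c a)) * ∑ S : Subk n k, ‖pp S‖ ^ 2 := by
          rw [Finset.mul_sum]
      _ = ∏ a : Fin k, w (c a) := by rw [hP1, mul_one]
  -- final chain
  rw [prod_filter_lt hk l, prod_filter_lt hk s]
  have hx0 : 0 ≤ ‖∏ a : Fin k, l (c a)‖ := norm_nonneg _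
  have hy0 : 0 ≤ ∏ a : Fin k, s (c a) := Finset.prod_nonneg fun a _ => hs0 _
  have hsq : ‖∏ a : Fin k, l (c a)‖ ^ 2 ≤ (∏ a : Fin k, s (c a)) ^ 2 := by
    calc ‖∏ a : Fin k, l (c a)‖ ^ 2
        = ‖det (Bᴴ * A * B)‖ ^ 2 := by rw [hdetT]
      _ ≤ (∑ S : Subk n k, ‖bb S‖ * ‖ab S‖) ^ 2 :=
          pow_le_pow_left₀ (norm_nonneg _) habsle 2
      _ ≤ (∑ S : Subk n k, ‖bb S‖ ^ 2) * ∑ S : Subk n k, ‖ab S‖ ^ 2 :=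
          Finset.sum_mul_sq_le_sq_mul_sq _ _ _
      _ = ∑ S : Subk n k, ‖ab S‖ ^ 2 := by rw [hB1, one_mul]
      _ ≤ ∏ a : Fin k, w (c a) := by rw [hABsum]; exact hsum_bound
      _ = (∏ a : Fin k, s (c a)) ^ 2 := by
          rw [hw, ← Finset.prod_pow]
  calc ‖∏ a : Fin k, l (c a)‖
      = Real.sqrt (‖∏ a : Fin k, l (c a)‖ ^ 2) := (Real.sqrt_sq hx0).symm
    _ ≤ Real.sqrt ((∏ a : Fin k, s (c a)) ^ 2) := Real.sqrt_le_sqrt hsq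
    _ = ∏ a : Fin k, s (c a) := Real.sqrt_sq hy0


end WMM

end WMMaux

/-- Weyl's multiplicative majorization: partial products of moduli of eigenvalues
(ordered by non-increasing modulus) are bounded by partial products of singular values
(in non-increasing order), with equality for the full products. -/
theorem weyl_multiplicative_majorization (n : ℕ) (A : Matrix (Fin n) (Fin n) ℂ)
    (l : Fin n → ℂ) (hl : A.charpoly.roots = Multiset.map l Finset.univ.val)
    (hlmono : Antitone fun i => ‖l i‖)
    (s : Fin n → ℝ) (hsmono : Antitone s)
    (hse : ∃ e : Equiv.Perm (Fin n), s = singVals A ∘ e) :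
    (∀ k : ℕ, k ≤ n →
      ‖∏ i ∈ Finset.univ.filter (fun i : Fin n => (i : ℕ) < k), l i‖ ≤
        ∏ i ∈ Finset.univ.filter (fun i : Fin n => (i : ℕ) < k), s i) ∧
      ‖∏ i, l i‖ = ∏ i, s i := by
  exact WMM.weyl' n A l hl hlmono s hsmono hse
end
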